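/- For every h ≥ 1 let S_h be the complete balanced binary trie of height h over the alphabet {a, b}, i.e., the set of all strings over {a, b} of length at most h, with n = 2^{h+1} − 1 nodes; its symbol distribution is n_a = n_b = (n − 1)/2. Then n·H_0(S_h) = (n−1)·log₂(2n/(n−1)) + (n+1)·log₂(2n/(n+1)), and n − 1 ≤ n·H_0(S_h) ≤ 2n. -/

import Mathlib

/-!
In the complete trie of height `k + 1`, appending a symbol `a` is a bijection from the strings
of length at most `k` onto the nodes ending in `a`, and the root ends in no symbol; so for the
binary alphabet `n = 2c + 1` with `n_a = n_b = c`. Each summand of `H₀` is the binary entropy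
of `nᵢ / n` in bits, hence `n·H₀ = 2n·H(c/n)/log 2`. The identity is this unfolded, the upper
bound is `H ≤ log 2`, and the lower bound is the chord bound `2p·log 2 ≤ H(p)` on `[0, 1/2]`,
which holds by concavity of `H`.
-/

/-- The 0-th order empirical entropy of a trie `S` with `n` nodes and symbol
distribution `(n_1, …, n_σ)` (where `n_i` counts the nonempty strings of `S`
ending with the `i`-th symbol):
`H₀ = ∑ᵢ (nᵢ/n)·log₂(n/nᵢ) + ((n−nᵢ)/n)·log₂(n/(n−nᵢ))`. -/
noncomputable def trieH0 (σ : ℕ) (S : Finset (List (Fin σ))) : ℝ :=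
  ∑ i : Fin σ,
    (((S.filter fun s => s.getLast? = some i).card : ℝ) / (S.card : ℝ) *
        Real.logb 2 ((S.card : ℝ) / ((S.filter fun s => s.getLast? = some i).card : ℝ)) +
      ((S.card : ℝ) - ((S.filter fun s => s.getLast? = some i).card : ℝ)) / (S.card : ℝ) *
        Real.logb 2 ((S.card : ℝ) /
          ((S.card : ℝ) - ((S.filter fun s => s.getLast? = some i).card : ℝ))))

open Finset Real

section CompleteTrie

variable {α : Type*} [DecidableEq α]

lemma card_filter_getLast?_eq_card_filter_length_le {S : Finset (List α)} {k : ℕ}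
    (hS : ∀ l, l ∈ S ↔ l.length ≤ k + 1) (a : α) :
    #{l ∈ S | l.getLast? = some a} = #{l ∈ S | l.length ≤ k} := by
  symm
  refine card_nbij' (· ++ [a]) List.dropLast ?_ ?_ ?_ ?_
  · intro l hl
    simp only [mem_coe, mem_filter, hS] at hl ⊢
    simp [hl.2]
  · intro l hl
    simp only [mem_coe, mem_filter, hS, List.getLast?_eq_some_iff] at hl ⊢
    obtain ⟨hlen, l', rfl⟩ := hl
    simp only [List.dropLast_concat, List.length_append, List.length_singleton] at hlen ⊢
    omega
  · intro l _
    exact List.dropLast_concat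
  · intro l hl
    simp only [mem_coe, mem_filter, List.getLast?_eq_some_iff] at hl
    obtain ⟨-, l', rfl⟩ := hl
    simp

lemma card_eq_one_add_sum_card_filter_getLast? [Fintype α] {S : Finset (List α)}
    (hS : [] ∈ S) : #S = 1 + ∑ a, #{l ∈ S | l.getLast? = some a} := by
  rw [card_eq_sum_card_fiberwise (f := List.getLast?) (t := univ) (by simp),
    Fintype.sum_option]
  congr
  rw [card_eq_one]
  exact ⟨[], by ext l; simp only [mem_filter, List.getLast?_eq_none_iff, mem_singleton]; grind⟩

end CompleteTrie

lemma div_mul_logb_add_sub_div_mul_logb {c n : ℝ} (hn : n ≠ 0) :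
    c / n * logb 2 (n / c) + (n - c) / n * logb 2 (n / (n - c)) = binEntropy (c / n) / log 2 := by
  simp only [binEntropy, logb, inv_div, one_sub_div hn]
  ring

lemma trieH0_eq_sum_binEntropy {σ : ℕ} {S : Finset (List (Fin σ))} (hS : S.Nonempty) :
    trieH0 σ S = ∑ i, binEntropy (#{l ∈ S | l.getLast? = some i} / #S) / log 2 := by
  simp only [trieH0, div_mul_logb_add_sub_div_mul_logb (Nat.cast_ne_zero.2 hS.card_ne_zero)]

lemma two_mul_mul_log_two_le_binEntropy {p : ℝ} (hp₀ : 0 ≤ p) (hp : p ≤ 2⁻¹) :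
    2 * p * log 2 ≤ binEntropy p := by
  have := strictConcave_binEntropy.concaveOn.2 (show (2⁻¹ : ℝ) ∈ Set.Icc 0 1 by norm_num)
    (show (0 : ℝ) ∈ Set.Icc 0 1 by simp) (show 0 ≤ 2 * p by positivity)
    (show 0 ≤ 1 - 2 * p by linarith) (by ring)
  simpa only [smul_eq_mul, mul_zero, add_zero, binEntropy_two_inv, binEntropy_zero,
    show 2 * p * 2⁻¹ = p by ring] using this

section CompleteBinaryTrie

variable {c n : ℝ}

lemma mul_two_binEntropy_eq (hn : 2 * c + 1 = n) (hc : 0 < c) :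
    n * (2 * binEntropy (c / n) / log 2) =
      (n - 1) * logb 2 (2 * n / (n - 1)) + (n + 1) * logb 2 (2 * n / (n + 1)) := by
  subst hn
  have h1 : 2 * c + 1 - 1 = 2 * c := by ring
  have h2 : 2 * c + 1 + 1 = 2 * (c + 1) := by ring
  rw [h1, h2, mul_div_mul_left _ _ two_ne_zero, mul_div_mul_left _ _ two_ne_zero]
  simp only [binEntropy, logb, inv_div, one_sub_div (by positivity : 2 * c + 1 ≠ 0)]
  field_simp
  rw [show 2 * c + 1 - c = c + 1 by ring]

lemma sub_one_le_mul_two_binEntropy (hn : 2 * c + 1 = n) (hc : 0 < c) :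
    n - 1 ≤ n * (2 * binEntropy (c / n) / log 2) := by
  have hn₀ : 0 < n := by linarith
  have hp : 2 * (c / n) * log 2 ≤ binEntropy (c / n) :=
    two_mul_mul_log_two_le_binEntropy (by positivity) (by
      rw [div_le_iff₀ hn₀]; linarith)
  calc n - 1 ≤ n * (2 * (2 * (c / n) * log 2) / log 2) := by
        field_simp
        linarith
    _ ≤ n * (2 * binEntropy (c / n) / log 2) := by gcongr

lemma mul_two_binEntropy_le (hn : 0 ≤ n) (p : ℝ) :
    n * (2 * binEntropy p / log 2) ≤ 2 * n := by
  calc n * (2 * binEntropy p / log 2) ≤ n * (2 * log 2 / log 2) := by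
        gcongr
        exact binEntropy_le_log_two
    _ = 2 * n := by field_simp

end CompleteBinaryTrie

/-- For the complete balanced binary trie `S_h` of height `h ≥ 1`, with
`n = 2^{h+1} − 1` nodes, one has
`n·H₀(S_h) = (n−1)·log₂(2n/(n−1)) + (n+1)·log₂(2n/(n+1))`, and
`n − 1 ≤ n·H₀(S_h) ≤ 2n`. -/
theorem stmt12 (h : ℕ) (hh : 1 ≤ h) (S : Finset (List (Fin 2)))
    (hS : ∀ l : List (Fin 2), l ∈ S ↔ l.length ≤ h) :
    ((S.card : ℝ) * trieH0 2 S =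
      ((S.card : ℝ) - 1) * Real.logb 2 (2 * (S.card : ℝ) / ((S.card : ℝ) - 1)) +
        ((S.card : ℝ) + 1) * Real.logb 2 (2 * (S.card : ℝ) / ((S.card : ℝ) + 1))) ∧
    (S.card : ℝ) - 1 ≤ (S.card : ℝ) * trieH0 2 S ∧
    (S.card : ℝ) * trieH0 2 S ≤ 2 * (S.card : ℝ) := by
  obtain ⟨k, rfl⟩ : ∃ k, h = k + 1 := ⟨h - 1, by omega⟩
  have hroot : [] ∈ S := by simp [hS]
  set c := #{l ∈ S | l.length ≤ k}
  have hsymbol (i : Fin 2) : #{l ∈ S | l.getLast? = some i} = c :=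
    card_filter_getLast?_eq_card_filter_length_le hS i
  have hcard : 2 * (c : ℝ) + 1 = #S := by
    rw [card_eq_one_add_sum_card_filter_getLast? hroot]
    simp only [hsymbol, Fin.sum_univ_two, Nat.cast_add, Nat.cast_one]
    ring
  have hc : 0 < (c : ℝ) := Nat.cast_pos.2 (card_pos.2 ⟨[], by simp [hS]⟩)
  have hH0 : trieH0 2 S = 2 * binEntropy (c / #S) / log 2 := by
    rw [trieH0_eq_sum_binEntropy ⟨[], hroot⟩, Fin.sum_univ_two, hsymbol, hsymbol]
    ring
  rw [hH0]
  exact ⟨mul_two_binEntropy_eq hcard hc, sub_one_le_mul_two_binEntropy hcard hc,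
    mul_two_binEntropy_le (Nat.cast_nonneg _) _⟩
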